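/- arXiv:2106.05999 — 2 statements merged into one kernel-verified Lean document; each statement's English description precedes it below -/
import Mathlib

section
/- Let G (generators) and U (uncertainty sources) be nonempty finite sets, let σ : U × U → ℝ with s² := Σ_{v,w ∈ U} σ_{vw} > 0 and s := √(s²). For each i ∈ G let αᵢ > 0 and let c₂ᵢ, zᵢ, δ̄ᵢ, δ̲ᵢ be real numbers. Define for each u ∈ U the nodal balancing price χ_u := (1/|G|)·Σ_{i∈G} (Σ_{v∈U} αᵢ·σ_{uv})·(2c₂ᵢ + (zᵢ/(αᵢ·s))·(δ̄ᵢ + δ̲ᵢ)) and the system-wide balancing price χ := (1/|G|)·Σ_{i∈G} (2c₂ᵢ·s²·αᵢ + zᵢ·s·(δ̄ᵢ + δ̲ᵢ)). Then for every u ∈ U, χ_u = β_u·χ with β_u = (Σ_{v∈U} σ_{uv})/s², and moreover Σ_{u∈U} β_u = 1, hence Σ_{u∈U} χ_u = χ. -/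
open Finset

/-!
With identical participation factors, generator `i` contributes `αᵢ (∑ᵥ σᵤᵥ)` to the nodal
price at `u` and `αᵢ s²` to the system-wide one; the reserve-cost terms scale the same way
once `αᵢ` cancels and `s² = s · s` is used. So every generator's nodal term is its
system-wide term times the row share `βᵤ = (∑ᵥ σᵤᵥ) / s²`, and the row shares add up to one.
-/

lemma nodal_term_eq_share_mul_systemwide_term {K : Type*} [Field K] {a r c z d s S : K}
    (ha : a ≠ 0) (hs : s ≠ 0) (hsS : s * s = S) :
    a * r * (2 * c + z / (a * s) * d) = r / S * (2 * c * S * a + z * s * d) := by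
  subst hsS
  field_simp

lemma sum_div_sum_eq_one {ι K : Type*} [Fintype ι] [DivisionSemiring K] {f : ι → K}
    (hf : ∑ i, f i ≠ 0) :
    ∑ i, f i / ∑ j, f j = 1 := by
  rw [← sum_div, div_self hf]

lemma sum_eq_of_eq_mul_of_sum_eq_one {ι R : Type*} [Fintype ι] [NonAssocSemiring R]
    {x b : ι → R} {c : R}
    (hx : ∀ i, x i = b i * c) (hb : ∑ i, b i = 1) : ∑ i, x i = c := by
  simp only [hx, ← sum_mul, hb, one_mul]

theorem nodal_vs_systemwide_balancing_price_general
    {G U : Type*} [Fintype G] [Fintype U]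
    (σ : U → U → ℝ) (s : ℝ)
    (hs2 : 0 < ∑ v, ∑ w, σ v w)
    (hs : s = Real.sqrt (∑ v, ∑ w, σ v w))
    (α : G → ℝ) (hα : ∀ i, 0 < α i)
    (c₂ z δbar δunder : G → ℝ)
    (χnod : U → ℝ)
    (hχnod : ∀ u, χnod u = (1 / (Fintype.card G : ℝ)) *
      ∑ i, (∑ v, α i * σ u v) *
        (2 * c₂ i + (z i / (α i * s)) * (δbar i + δunder i)))
    (χ : ℝ)
    (hχ : χ = (1 / (Fintype.card G : ℝ)) *
      ∑ i, (2 * c₂ i * (∑ v, ∑ w, σ v w) * α i + z i * s * (δbar i + δunder i)))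
    (β : U → ℝ)
    (hβ : ∀ u, β u = (∑ v, σ u v) / (∑ v, ∑ w, σ v w)) :
    (∀ u, χnod u = β u * χ) ∧ (∑ u, β u) = 1 ∧ (∑ u, χnod u) = χ := by
  have hss : s * s = ∑ v, ∑ w, σ v w := hs ▸ Real.mul_self_sqrt hs2.le
  have hs0 : s ≠ 0 := (hs ▸ Real.sqrt_pos.mpr hs2).ne'
  have hnodal : ∀ u, χnod u = β u * χ := by
    intro u
    rw [hχnod, hβ, hχ, mul_left_comm]
    congr 1
    rw [mul_sum]
    refine sum_congr rfl fun i _ => ?_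
    rw [← mul_sum]
    exact nodal_term_eq_share_mul_systemwide_term (hα i).ne' hs0 hss
  have hβsum : ∑ u, β u = 1 := by
    simp only [hβ]
    exact sum_div_sum_eq_one (f := fun u => ∑ v, σ u v) hs2.ne'
  exact ⟨hnodal, hβsum, sum_eq_of_eq_mul_of_sum_eq_one hnodal hβsum⟩

/-- Relationship between nodal (LBP) and system-wide balancing prices under
symmetric balancing: `χᵤ = βᵤ · χ` with `βᵤ = (∑ᵥ σᵤᵥ)/s²`, `∑ᵤ βᵤ = 1`, and
hence `∑ᵤ χᵤ = χ`. -/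
theorem nodal_vs_systemwide_balancing_price
    {G U : Type*} [Fintype G] [Fintype U] [Nonempty G] [Nonempty U]
    (σ : U → U → ℝ) (s : ℝ)
    (hs2 : 0 < ∑ v, ∑ w, σ v w)
    (hs : s = Real.sqrt (∑ v, ∑ w, σ v w))
    (α : G → ℝ) (hα : ∀ i, 0 < α i)
    (c₂ z δbar δunder : G → ℝ)
    (χnod : U → ℝ)
    (hχnod : ∀ u, χnod u = (1 / (Fintype.card G : ℝ)) *
      ∑ i, (∑ v, α i * σ u v) *
        (2 * c₂ i + (z i / (α i * s)) * (δbar i + δunder i)))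
    (χ : ℝ)
    (hχ : χ = (1 / (Fintype.card G : ℝ)) *
      ∑ i, (2 * c₂ i * (∑ v, ∑ w, σ v w) * α i + z i * s * (δbar i + δunder i)))
    (β : U → ℝ)
    (hβ : ∀ u, β u = (∑ v, σ u v) / (∑ v, ∑ w, σ v w)) :
    (∀ u, χnod u = β u * χ) ∧ (∑ u, β u) = 1 ∧ (∑ u, χnod u) = χ :=
  nodal_vs_systemwide_balancing_price_general σ s hs2 hs α hα c₂ z δbar δunder χnod hχnod χ hχ β hβ
end

section
/- Let G and U be finite sets and fix u ∈ U. Let w_u > 0, κ_u ∈ ℝ, ζ : U × U → ℝ, and for each v ∈ U let σ_v ∈ ℝ with σ_u = κ_u·w_u; define σ_{uv} := ζ_{uv}·σ_u·σ_v. For each i ∈ G let α_{iu}, α_{iv} ∈ ℝ, Sᵢ ≠ 0, and c₂ᵢ, zᵢ, δ̄ᵢ, δ̲ᵢ ∈ ℝ. Define the marginal RES cost rate c_u := Σ_{i∈G} ((Σ_{v∈U} α_{iu}·α_{iv}·ζ_{uv}·κ_u·σ_v)/Sᵢ)·(2c₂ᵢ·Sᵢ + zᵢ·(δ̄ᵢ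 + δ̲ᵢ)). Then the marginal-cost-based RES operating cost equals the balancing-payment-based cost: w_u·c_u = Σ_{i∈G} α_{iu}·((Σ_{v∈U} α_{iv}·σ_{uv})/Sᵢ)·(2c₂ᵢ·Sᵢ + zᵢ·(δ̄ᵢ + δ̲ᵢ)). -/
/-! Because `σᵤ = κᵤ wᵤ`, every covariance `σᵤᵥ = ζᵤᵥ κᵤ wᵤ σᵥ` carries the factor `wᵤ`; pulling it
out of the inner sum over `v` matches the two costs generator by generator. -/

open Finset

theorem mul_sum_corr_eq_mul_sum_cov {ι : Type*} (s : Finset ι) (a ρ σ cov : ι → ℝ)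
    (b w κ σu : ℝ) (hσu : σu = κ * w) (hcov : ∀ v, cov v = ρ v * σu * σ v) :
    w * ∑ v ∈ s, b * a v * ρ v * κ * σ v = b * ∑ v ∈ s, a v * cov v := by
  rw [mul_sum, mul_sum]
  refine sum_congr rfl fun v _ => ?_
  rw [hcov, hσu]
  ring

theorem res_cost_equivalence_general
    {G U : Type*} [Fintype G] [Fintype U] (u : U)
    (w : U → ℝ) (κ : U → ℝ)
    (ζ : U → U → ℝ) (σ : U → ℝ) (hσu : σ u = κ u * w u)
    (σ2 : U → U → ℝ) (hσ2 : ∀ v v' : U, σ2 v v' = ζ v v' * σ v * σ v')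
    (α : G → U → ℝ) (S : G → ℝ)
    (c₂ z δbar δunder : G → ℝ)
    (c : U → ℝ)
    (hc : c u = ∑ i, ((∑ v, α i u * α i v * ζ u v * κ u * σ v) / S i) *
      (2 * c₂ i * S i + z i * (δbar i + δunder i))) :
    w u * c u = ∑ i, α i u * ((∑ v, α i v * σ2 u v) / S i) *
      (2 * c₂ i * S i + z i * (δbar i + δunder i)) := by
  rw [hc, mul_sum]
  refine sum_congr rfl fun i _ => ?_
  have key := mul_sum_corr_eq_mul_sum_cov univ (α i) (ζ u) σ (σ2 u) (α i u) (w u) (κ u) (σ u)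
    hσu (hσ2 u)
  linear_combination (2 * c₂ i * S i + z i * (δbar i + δunder i)) / S i * key

/-- Cost equivalence between the marginal-cost-based RES operating cost
`wᵤ · cᵤ` and the balancing-payment-based compensating cost `C^αᵤ`. -/
theorem res_cost_equivalence
    {G U : Type*} [Fintype G] [Fintype U] (u : U)
    (w : U → ℝ) (hw : 0 < w u) (κ : U → ℝ)
    (ζ : U → U → ℝ) (σ : U → ℝ) (hσu : σ u = κ u * w u)
    (σ2 : U → U → ℝ) (hσ2 : ∀ v v' : U, σ2 v v' = ζ v v' * σ v * σ v')
    (α : G → U → ℝ) (S : G → ℝ) (hS : ∀ i, S i ≠ 0)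
    (c₂ z δbar δunder : G → ℝ)
    (c : U → ℝ)
    (hc : c u = ∑ i, ((∑ v, α i u * α i v * ζ u v * κ u * σ v) / S i) *
      (2 * c₂ i * S i + z i * (δbar i + δunder i))) :
    w u * c u = ∑ i, α i u * ((∑ v, α i v * σ2 u v) / S i) *
      (2 * c₂ i * S i + z i * (δbar i + δunder i)) :=
  res_cost_equivalence_general u w κ ζ σ hσu σ2 hσ2 α S c₂ z δbar δunder c hc
end
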